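/- Let 𝔼̂_j (j ≥ 1) be sublinear expectations on ℋ and X an m-dimensional random vector with sup_j 𝔼̂_j[|X|] =: C < ∞. Let ψ_j, ψ : ℝ^m → ℝ be bounded by K, Lipschitz with common constant L, with ψ_j → ψ pointwise. If additionally 𝔼̂_j[ψ(X)] → ℓ, then 𝔼̂_j[ψ_j(X)] → ℓ. -/

import Mathlib

open scoped NNReal

/-- Bounded Lipschitz real-valued functions on a metric space. -/
def IsBLip {α : Type*} [MetricSpace α] (φ : α → ℝ) : Prop :=
  (∃ K : ℝ, ∀ x, |φ x| ≤ K) ∧ (∃ L : ℝ≥0, LipschitzWith L φ)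

/-!
Sublinearity gives `|𝔼̂ⱼ[ψⱼ(X)] - 𝔼̂ⱼ[ψ(X)]| ≤ 𝔼̂ⱼ[|ψⱼ - ψ|(X)]`. Being equi-Lipschitz, `ψⱼ → ψ`
uniformly on the compact ball of radius `N`, say with error `aⱼ`, while off that ball
`|ψⱼ - ψ| ≤ 2K ≤ (2K/N)‖x‖`. Hence `𝔼̂ⱼ[|ψⱼ - ψ|(X)] ≤ aⱼ + (2K/N) C`; let `j → ∞`, then `N → ∞`.
-/

open Filter Topology Metric

theorem EquicontinuousOn.tendstoUniformlyOn_of_tendsto {X α ι : Type*} [TopologicalSpace X]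
    [UniformSpace α] {F : ι → X → α} {f : X → α} {K : Set X} {l : Filter ι}
    (hF : EquicontinuousOn F K) (hK : IsCompact K)
    (h : ∀ x ∈ K, Tendsto (F · x) l (𝓝 (f x))) : TendstoUniformlyOn F f l K := by
  have hcompact : ∀ s ∈ ({K} : Set (Set X)), IsCompact s := by simpa using hK
  have heqcont : ∀ s ∈ ({K} : Set (Set X)), EquicontinuousOn F s := by simpa using hF
  refine UniformOnFun.tendsto_iff_tendstoUniformlyOn.1
    ((EquicontinuousOn.tendsto_uniformOnFun_iff_pi' hcompact heqcont l f).2 ?_) K rfl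
  simpa [tendsto_pi_nhds] using h

theorem le_add_div_mul_norm_of_le_on_closedBall {α : Type*} [SeminormedAddCommGroup α]
    {d : α → ℝ} {B ε N : ℝ} (hB : ∀ x, d x ≤ B) (hB₀ : 0 ≤ B) (hε : 0 ≤ ε) (hN : 0 < N)
    (hball : ∀ x ∈ closedBall (0 : α) N, d x ≤ ε) (x : α) : d x ≤ ε + B / N * ‖x‖ := by
  by_cases hx : ‖x‖ ≤ N
  · have hsmall := hball x (mem_closedBall_zero_iff.2 hx)
    have : 0 ≤ B / N * ‖x‖ := by positivity
    linarith
  · have : B ≤ B / N * ‖x‖ := by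
      rw [div_mul_eq_mul_div, le_div_iff₀ hN]
      exact mul_le_mul_of_nonneg_left (not_le.1 hx).le hB₀
    linarith [hB x]

section IsBLip

variable {α : Type*} [MetricSpace α] {φ χ : α → ℝ}

theorem isBLip_const (c : ℝ) : IsBLip fun _ : α => c :=
  ⟨⟨|c|, fun _ => le_rfl⟩, ⟨0, LipschitzWith.const c⟩⟩

theorem IsBLip.add (hφ : IsBLip φ) (hχ : IsBLip χ) : IsBLip fun x => φ x + χ x := by
  obtain ⟨⟨K, hK⟩, ⟨L, hL⟩⟩ := hφ
  obtain ⟨⟨K', hK'⟩, ⟨L', hL'⟩⟩ := hχ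
  exact ⟨⟨K + K', fun x => (abs_add_le _ _).trans (add_le_add (hK x) (hK' x))⟩,
    ⟨L + L', hL.add hL'⟩⟩

theorem IsBLip.sub (hφ : IsBLip φ) (hχ : IsBLip χ) : IsBLip fun x => φ x - χ x := by
  obtain ⟨⟨K, hK⟩, ⟨L, hL⟩⟩ := hφ
  obtain ⟨⟨K', hK'⟩, ⟨L', hL'⟩⟩ := hχ
  exact ⟨⟨K + K', fun x => (abs_sub _ _).trans (add_le_add (hK x) (hK' x))⟩,
    ⟨L + L', hL.sub hL'⟩⟩

theorem IsBLip.abs (hφ : IsBLip φ) : IsBLip fun x => |φ x| := by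
  obtain ⟨⟨K, hK⟩, ⟨L, hL⟩⟩ := hφ
  exact ⟨⟨K, fun x => (abs_abs (φ x)).symm ▸ hK x⟩, ⟨1 * L, lipschitzWith_one_norm.comp hL⟩⟩

end IsBLip

structure IsSublinearExpectation {Ω : Type*} (H : Set (Ω → ℝ)) (E : (Ω → ℝ) → ℝ) : Prop where
  mono : ∀ X Y, X ∈ H → Y ∈ H → (∀ ω, X ω ≤ Y ω) → E X ≤ E Y
  const : ∀ c : ℝ, E (fun _ => c) = c
  add_le : ∀ X Y, X ∈ H → Y ∈ H → E (X + Y) ≤ E X + E Y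
  smul : ∀ (c : ℝ) X, 0 ≤ c → X ∈ H → E (c • X) = c * E X

namespace IsSublinearExpectation

section

variable {Ω α : Type*} [MetricSpace α] {H : Set (Ω → ℝ)} {E : (Ω → ℝ) → ℝ} {X : Ω → α}
  {φ χ : α → ℝ}

theorem sub_le_comp_abs_sub (hE : IsSublinearExpectation H E)
    (hcomp : ∀ φ : α → ℝ, IsBLip φ → (fun ω => φ (X ω)) ∈ H) (hφ : IsBLip φ) (hχ : IsBLip χ) :
    E (fun ω => φ (X ω)) - E (fun ω => χ (X ω)) ≤ E (fun ω => |φ (X ω) - χ (X ω)|) := by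
  have hd := (hφ.sub hχ).abs
  have : E (fun ω => φ (X ω)) ≤ E (fun ω => χ (X ω)) + E (fun ω => |φ (X ω) - χ (X ω)|) :=
    (hE.mono _ _ (hcomp _ hφ) (hcomp _ (hχ.add hd)) fun ω => by
      linarith [le_abs_self (φ (X ω) - χ (X ω))]).trans (hE.add_le _ _ (hcomp _ hχ) (hcomp _ hd))
  linarith

theorem abs_sub_le_comp_abs_sub (hE : IsSublinearExpectation H E)
    (hcomp : ∀ φ : α → ℝ, IsBLip φ → (fun ω => φ (X ω)) ∈ H) (hφ : IsBLip φ) (hχ : IsBLip χ) :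
    |E (fun ω => φ (X ω)) - E (fun ω => χ (X ω))| ≤ E (fun ω => |φ (X ω) - χ (X ω)|) := by
  rw [abs_sub_le_iff]
  refine ⟨hE.sub_le_comp_abs_sub hcomp hφ hχ, ?_⟩
  simpa only [abs_sub_comm] using hE.sub_le_comp_abs_sub hcomp hχ hφ

theorem comp_le_add_mul (hE : IsSublinearExpectation H E)
    (hcomp : ∀ φ : α → ℝ, IsBLip φ → (fun ω => φ (X ω)) ∈ H) (hφ : IsBLip φ)
    {Y : Ω → ℝ} {ε c : ℝ} (hc : 0 ≤ c) (hY : Y ∈ H) (hcY : c • Y ∈ H)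
    (hle : ∀ ω, φ (X ω) ≤ ε + c * Y ω) :
    E (fun ω => φ (X ω)) ≤ ε + c * E Y := by
  have hshift := hφ.sub (isBLip_const ε)
  have hsplit : E (fun ω => φ (X ω)) ≤ E (fun ω => φ (X ω) - ε) + ε := by
    have := hE.add_le _ _ (hcomp _ hshift) (hcomp _ (isBLip_const ε))
    rwa [hE.const, show ((fun ω => φ (X ω) - ε) + fun _ => ε) = fun ω => φ (X ω) by
      ext; simp] at this
  have hmono : E (fun ω => φ (X ω) - ε) ≤ E (c • Y) :=
    hE.mono _ _ (hcomp _ hshift) hcY fun ω => by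
      simp only [Pi.smul_apply, smul_eq_mul]; linarith [hle ω]
  linarith [hE.smul c Y hc hY]

end

section

variable {Ω α : Type*} [NormedAddCommGroup α] {H : Set (Ω → ℝ)} {X : Ω → α}

theorem comp_abs_sub_le_of_le_on_closedBall {E : (Ω → ℝ) → ℝ} (hE : IsSublinearExpectation H E)
    (hH_smul : ∀ (c : ℝ) Y, Y ∈ H → c • Y ∈ H) (hXnorm : (fun ω => ‖X ω‖) ∈ H)
    (hcomp : ∀ φ : α → ℝ, IsBLip φ → (fun ω => φ (X ω)) ∈ H)
    {φ χ : α → ℝ} (hφ : IsBLip φ) (hχ : IsBLip χ) {K : ℝ} (hφK : ∀ x, |φ x| ≤ K)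
    (hχK : ∀ x, |χ x| ≤ K) {ε N : ℝ} (hε : 0 ≤ ε) (hN : 0 < N)
    (hball : ∀ x ∈ closedBall (0 : α) N, |φ x - χ x| ≤ ε) :
    E (fun ω => |φ (X ω) - χ (X ω)|) ≤ ε + 2 * K / N * E (fun ω => ‖X ω‖) := by
  have hK : 0 ≤ 2 * K := by linarith [(abs_nonneg _).trans (hφK 0)]
  have hbound : ∀ x, |φ x - χ x| ≤ 2 * K := fun x => by
    linarith [abs_sub (φ x) (χ x), hφK x, hχK x]
  exact hE.comp_le_add_mul hcomp (hφ.sub hχ).abs (by positivity) hXnorm (hH_smul _ _ hXnorm)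
    fun ω => le_add_div_mul_norm_of_le_on_closedBall hbound hK hε hN hball (X ω)

theorem tendsto_comp_sub_comp_of_equiLipschitz [ProperSpace α] {E : ℕ → (Ω → ℝ) → ℝ}
    (hE : ∀ j, IsSublinearExpectation H (E j)) (hH_smul : ∀ (c : ℝ) Y, Y ∈ H → c • Y ∈ H)
    (hXnorm : (fun ω => ‖X ω‖) ∈ H) (hcomp : ∀ φ : α → ℝ, IsBLip φ → (fun ω => φ (X ω)) ∈ H)
    {C : ℝ} (hC : ∀ j, E j (fun ω => ‖X ω‖) ≤ C) {ψ : ℕ → α → ℝ} {ψlim : α → ℝ} {K : ℝ}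
    {L : ℝ≥0} (hbd : ∀ j x, |ψ j x| ≤ K) (hbdlim : ∀ x, |ψlim x| ≤ K)
    (hlip : ∀ j, LipschitzWith L (ψ j)) (hliplim : LipschitzWith L ψlim)
    (hptwise : ∀ x, Tendsto (fun j => ψ j x) atTop (𝓝 (ψlim x))) :
    Tendsto (fun j => E j (fun ω => ψ j (X ω)) - E j (fun ω => ψlim (X ω))) atTop (𝓝 0) := by
  have hK : 0 ≤ K := (abs_nonneg _).trans (hbdlim 0)
  refine Metric.tendsto_nhds.2 fun ε hε => ?_
  obtain ⟨N, hNC, hN⟩ : ∃ N : ℕ, 2 * K * C / N < ε / 2 ∧ 0 < N :=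
    (((tendsto_const_div_atTop_nhds_zero_nat (2 * K * C)).eventually
      (gt_mem_nhds (half_pos hε))).and (eventually_gt_atTop 0)).exists
  have hN' : (0 : ℝ) < N := Nat.cast_pos.2 hN
  have hunif := ((LipschitzWith.uniformEquicontinuous ψ L hlip).equicontinuous.equicontinuousOn
    _).tendstoUniformlyOn_of_tendsto (isCompact_closedBall (0 : α) N) fun x _ => hptwise x
  filter_upwards [Metric.tendstoUniformlyOn_iff.1 hunif (ε / 2) (half_pos hε)] with j hj
  have hball : ∀ x ∈ closedBall (0 : α) N, |ψ j x - ψlim x| ≤ ε / 2 := fun x hx => by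
    simpa only [Real.dist_eq, abs_sub_comm] using (hj x hx).le
  have hφ : IsBLip (ψ j) := ⟨⟨K, hbd j⟩, ⟨L, hlip j⟩⟩
  have hχ : IsBLip ψlim := ⟨⟨K, hbdlim⟩, ⟨L, hliplim⟩⟩
  rw [Real.dist_eq, sub_zero]
  calc |E j (fun ω => ψ j (X ω)) - E j (fun ω => ψlim (X ω))|
      ≤ E j (fun ω => |ψ j (X ω) - ψlim (X ω)|) := (hE j).abs_sub_le_comp_abs_sub hcomp hφ hχ
    _ ≤ ε / 2 + 2 * K / N * E j (fun ω => ‖X ω‖) :=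
        (hE j).comp_abs_sub_le_of_le_on_closedBall hH_smul hXnorm hcomp hφ hχ (hbd j) hbdlim
          (half_pos hε).le hN' hball
    _ ≤ ε / 2 + 2 * K / N * C := by gcongr; exact hC j
    _ < ε := by rw [div_mul_eq_mul_div]; linarith

end

end IsSublinearExpectation

theorem varying_test_function_limit_general
    {Ω : Type*} {m : ℕ} (H : Set (Ω → ℝ)) (E : ℕ → (Ω → ℝ) → ℝ)
    (hmono : ∀ (j : ℕ) X Y, X ∈ H → Y ∈ H → (∀ ω, X ω ≤ Y ω) → E j X ≤ E j Y)
    (hconst : ∀ (j : ℕ) (c : ℝ), E j (fun _ : Ω => c) = c)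
    (hsub : ∀ (j : ℕ) X Y, X ∈ H → Y ∈ H → E j (X + Y) ≤ E j X + E j Y)
    (hpos : ∀ (j : ℕ) (c : ℝ) X, 0 ≤ c → X ∈ H → E j (c • X) = c * E j X)
    (hH_smul : ∀ (c : ℝ) X, X ∈ H → c • X ∈ H)
    (X : Ω → EuclideanSpace ℝ (Fin m))
    (hXnorm : (fun ω => ‖X ω‖) ∈ H)
    (hcomp : ∀ φ : EuclideanSpace ℝ (Fin m) → ℝ, IsBLip φ → (fun ω => φ (X ω)) ∈ H)
    (C : ℝ) (hC : ∀ j, E j (fun ω => ‖X ω‖) ≤ C)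
    (ψ : ℕ → EuclideanSpace ℝ (Fin m) → ℝ) (ψlim : EuclideanSpace ℝ (Fin m) → ℝ)
    (K : ℝ) (L : ℝ≥0)
    (hbd : ∀ j x, |ψ j x| ≤ K) (hbdlim : ∀ x, |ψlim x| ≤ K)
    (hlip : ∀ j, LipschitzWith L (ψ j)) (hliplim : LipschitzWith L ψlim)
    (hptwise : ∀ x, Filter.Tendsto (fun j => ψ j x) Filter.atTop (nhds (ψlim x)))
    (ℓ : ℝ)
    (hconv : Filter.Tendsto (fun j => E j (fun ω => ψlim (X ω))) Filter.atTop (nhds ℓ)) :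
    Filter.Tendsto (fun j => E j (fun ω => ψ j (X ω))) Filter.atTop (nhds ℓ) := by
  have hE : ∀ j, IsSublinearExpectation H (E j) := fun j =>
    ⟨hmono j, hconst j, hsub j, hpos j⟩
  have hdiff := IsSublinearExpectation.tendsto_comp_sub_comp_of_equiLipschitz hE hH_smul hXnorm
    hcomp hC hbd hbdlim hlip hliplim hptwise
  simpa using hdiff.add hconv

/-- Let `E_j` be sublinear expectations with `sup_j E_j[|X|] ≤ C < ∞`,
let `ψ_j, ψ` be bounded by `K`, Lipschitz with common constant `L`, with
`ψ_j → ψ` pointwise. If `E_j[ψ(X)] → ℓ`, then `E_j[ψ_j(X)] → ℓ`. -/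
theorem varying_test_function_limit
    {Ω : Type*} {m : ℕ} (H : Set (Ω → ℝ)) (E : ℕ → (Ω → ℝ) → ℝ)
    (hmono : ∀ (j : ℕ) X Y, X ∈ H → Y ∈ H → (∀ ω, X ω ≤ Y ω) → E j X ≤ E j Y)
    (hconst : ∀ (j : ℕ) (c : ℝ), E j (fun _ : Ω => c) = c)
    (hsub : ∀ (j : ℕ) X Y, X ∈ H → Y ∈ H → E j (X + Y) ≤ E j X + E j Y)
    (hpos : ∀ (j : ℕ) (c : ℝ) X, 0 ≤ c → X ∈ H → E j (c • X) = c * E j X)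
    (hH_add : ∀ X Y, X ∈ H → Y ∈ H → X + Y ∈ H)
    (hH_smul : ∀ (c : ℝ) X, X ∈ H → c • X ∈ H)
    (hH_const : ∀ c : ℝ, (fun _ : Ω => c) ∈ H)
    (X : Ω → EuclideanSpace ℝ (Fin m))
    (hXnorm : (fun ω => ‖X ω‖) ∈ H)
    (hcomp : ∀ φ : EuclideanSpace ℝ (Fin m) → ℝ, IsBLip φ → (fun ω => φ (X ω)) ∈ H)
    (C : ℝ) (hC : ∀ j, E j (fun ω => ‖X ω‖) ≤ C)
    (ψ : ℕ → EuclideanSpace ℝ (Fin m) → ℝ) (ψlim : EuclideanSpace ℝ (Fin m) → ℝ)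
    (K : ℝ) (L : ℝ≥0)
    (hbd : ∀ j x, |ψ j x| ≤ K) (hbdlim : ∀ x, |ψlim x| ≤ K)
    (hlip : ∀ j, LipschitzWith L (ψ j)) (hliplim : LipschitzWith L ψlim)
    (hptwise : ∀ x, Filter.Tendsto (fun j => ψ j x) Filter.atTop (nhds (ψlim x)))
    (ℓ : ℝ)
    (hconv : Filter.Tendsto (fun j => E j (fun ω => ψlim (X ω))) Filter.atTop (nhds ℓ)) :
    Filter.Tendsto (fun j => E j (fun ω => ψ j (X ω))) Filter.atTop (nhds ℓ) :=
  varying_test_function_limit_general H E hmono hconst hsub hpos hH_smul X hXnorm hcomp C hC ψ ψlim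
    K L hbd hbdlim hlip hliplim hptwise ℓ hconv
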